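/- Let G be a finite simple connected C-canonical graph of order n and diameter d with d ≡ 0 (mod 3) and m_G(−1) = n − d − 1, and let P = v_1 v_2 ⋯ v_{d+1} be a diameter path of G. If x and y are distinct vertices of G not on P each having exactly one neighbor on P, then x is adjacent to y and their unique neighbors on P are v_m and v_{m+3} for some m. Consequently, there are at most two vertices not on P having exactly one neighbor on P. -/

import Mathlib

/-!
On the rows of the path, the columns of `A + I` at `v 1, …, v (d + 1)` form the tridiagonal
all-ones matrix. A solution of the homogeneous three-term recurrence `c (k-1) + c k + c (k+1) = 0`
is 3-periodic, so one vanishing at both ends `0` and `d + 2 ≡ 2 (mod 3)` vanishes identically: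
these `d + 1` columns are independent, and as `rank (A + I) = n - m(-1) = d + 1` they span the
column space. Write the column of a vertex `z` off the path with unique path neighbour `v t` as
`∑ l i • col (v i)`. The path rows make `l` 3-periodic on each side of `t`, and the row of `z`
gives `l t = 1`; hence `t ≡ 1 (mod 3)` and `l s = 1` for every `s ≡ 1`. For a second such vertex
`z'` the row of `z'` reads `(A + I) z' z = l t' = 1`, so `z ~ z'`; `t = t'` would force equal
columns, i.e. equal closed neighbourhoods; and `v t, z, z', v t'` is a walk of length 3.
-/

attribute [local instance] Classical.propDecidable

/-- The multiplicity of `-1` as an eigenvalue of the adjacency matrix of `G`,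
i.e. the dimension over `ℝ` of the kernel of `A + I`. -/
noncomputable def multNegOne {V : Type*} [Fintype V] (G : SimpleGraph V) : ℕ :=
  Module.finrank ℝ (LinearMap.ker (Matrix.toLin' (G.adjMatrix ℝ + 1)))

/-- The set of indices `i ∈ {1, …, d+1}` such that `x` is adjacent to the vertex `v i`
of the diameter path `v 1, v 2, …, v (d+1)`. -/
noncomputable def pathNbrs {V : Type*} (G : SimpleGraph V) (d : ℕ) (v : ℕ → V) (x : V) :
    Finset ℕ :=
  (Finset.Icc 1 (d + 1)).filter fun i => G.Adj x (v i)

open Finset Submodule Finsupp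

section ThreeTermRecurrence

variable {M : Type*} [AddCommGroup M] {c : ℕ → M}

theorem add_three_mul_eq_of_sum_three_eq_zero {a b : ℕ}
    (h : ∀ k, a ≤ k → k + 2 ≤ b → c k + c (k + 1) + c (k + 2) = 0) :
    ∀ i q, a ≤ i → i + 3 * q ≤ b → c (i + 3 * q) = c i := by
  intro i q hi
  induction q with
  | zero => simp
  | succ q ih =>
    intro hq
    set k := i + 3 * q
    have h₁ : c k + c (k + 1) + c (k + 2) = 0 := h k (by omega) (by omega)
    have h₂ : c (k + 1) + c (k + 2) + c (k + 3) = 0 := h (k + 1) (by omega) (by omega)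
    rw [← ih (by omega), show i + 3 * (q + 1) = k + 3 by omega, ← sub_eq_zero]
    calc c (k + 3) - c k
        = (c (k + 1) + c (k + 2) + c (k + 3)) - (c k + c (k + 1) + c (k + 2)) := by abel
      _ = 0 := by rw [h₁, h₂, sub_zero]

theorem eq_zero_of_sum_three_eq_zero {d : ℕ} (hd : d % 3 = 0) (h₀ : c 0 = 0)
    (hd₂ : c (d + 2) = 0) (h : ∀ k ≤ d, c k + c (k + 1) + c (k + 2) = 0) :
    ∀ i ≤ d + 2, c i = 0 := by
  have hper := add_three_mul_eq_of_sum_three_eq_zero (a := 0) (b := d + 2) fun k _ hk ↦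
    h k (by omega)
  have h₂ : c 2 = 0 := by
    rw [← hper 2 (d / 3) (Nat.zero_le 2) (by omega), show 2 + 3 * (d / 3) = d + 2 by omega, hd₂]
  have h₁ : c 1 = 0 := by simpa [h₀, h₂] using h 0 (Nat.zero_le d)
  intro i hi
  rw [← Nat.mod_add_div i 3, hper _ _ (Nat.zero_le _) (by omega)]
  have : i % 3 < 3 := Nat.mod_lt i (by norm_num)
  interval_cases i % 3 <;> assumption

theorem mod_three_eq_one_of_sum_three_eq_zero {d t : ℕ} (hd : d % 3 = 0) (h₀ : c 0 = 0)
    (hd₂ : c (d + 2) = 0) (ht : t ≤ d + 2)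
    (h : ∀ k ≤ d, k + 1 ≠ t → c k + c (k + 1) + c (k + 2) = 0) (hct : c t ≠ 0) :
    t % 3 = 1 ∧ ∀ s ≤ d + 2, s % 3 = 1 → c s = c t := by
  have hleft : ∀ i ≤ t, c i = c (i % 3) := fun i hi ↦ by
    conv_lhs => rw [← Nat.mod_add_div i 3]
    exact add_three_mul_eq_of_sum_three_eq_zero (a := 0) (b := t)
      (fun k _ hk ↦ h k (by omega) (by omega)) _ _ (Nat.zero_le _) (by omega)
  have hright : ∀ s, t ≤ s → s ≤ d + 2 → s % 3 = t % 3 → c s = c t := fun s hts hs hst ↦ by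
    rw [show s = t + 3 * ((s - t) / 3) by omega]
    exact add_three_mul_eq_of_sum_three_eq_zero (a := t) (b := d + 2)
      (fun k hk _ ↦ h k (by omega) (by omega)) _ _ le_rfl (by omega)
  have ht₁ : t % 3 = 1 := by
    have : t % 3 ≠ 0 := fun h₃ ↦ hct (by rw [hleft t le_rfl, h₃, h₀])
    have : t % 3 ≠ 2 := fun h₃ ↦ hct (by rw [← hright (d + 2) ht le_rfl (by omega), hd₂])
    omega
  refine ⟨ht₁, fun s hs hs₁ ↦ ?_⟩
  rcases le_total s t with hst | hts
  · rw [hleft s hst, hleft t le_rfl, hs₁, ht₁]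
  · exact hright s hts hs (by omega)

end ThreeTermRecurrence

theorem Matrix.col_mem_span_image_of_linearIndepOn {K m n ι : Type*} [Field K] [Fintype m]
    [Fintype n] (A : Matrix m n K) {p : ι → n} {s : Finset ι}
    (hs : LinearIndepOn K (A.col ∘ p) s) (hrank : A.rank ≤ s.card) (j : n) :
    A.col j ∈ span K ((A.col ∘ p) '' s) := by
  have hle : span K ((A.col ∘ p) '' s) ≤ span K (Set.range A.col) :=
    span_mono (Set.image_subset_iff.mpr fun i _ ↦ ⟨p i, rfl⟩)
  have hdim : Module.finrank K (span K ((A.col ∘ p) '' s)) = s.card := by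
    rw [Set.image_eq_range, finrank_span_eq_card hs.linearIndependent]
    simp
  rw [eq_of_le_of_finrank_le hle (by rw [hdim, ← A.rank_eq_finrank_span_cols]; exact hrank)]
  exact subset_span ⟨j, rfl⟩

theorem Matrix.linearCombination_col_comp_apply {R m n ι : Type*} [CommSemiring R]
    (A : Matrix m n R) (p : ι → n) {s : Finset ι} {l : ι →₀ R} (hl : l ∈ supported R R s)
    (w : m) : linearCombination R (A.col ∘ p) l w = ∑ i ∈ s, l i * A w (p i) := by
  rw [linearCombination_apply_of_mem_supported R hl, Finset.sum_apply]
  rfl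

namespace SimpleGraph

variable {V : Type*} (G : SimpleGraph V)

theorem adjMatrix_add_one_apply {R : Type*} [AddMonoidWithOne R] (u w : V) :
    (G.adjMatrix R + 1) u w = if u = w ∨ G.Adj u w then 1 else 0 := by
  by_cases h : u = w
  · subst h
    simp
  · by_cases ha : G.Adj u w <;> simp [h, ha]

theorem adjMatrix_add_one_apply_comm {R : Type*} [AddMonoidWithOne R] (u w : V) :
    (G.adjMatrix R + 1) u w = (G.adjMatrix R + 1) w u :=
  (G.isSymm_adjMatrix.add Matrix.isSymm_one).apply w u

theorem rank_adjMatrix_add_one_add_multNegOne [Fintype V] :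
    (G.adjMatrix ℝ + 1).rank + multNegOne G = Fintype.card V := by
  rw [Matrix.rank, multNegOne, ← Matrix.toLin'_apply', LinearMap.finrank_range_add_finrank_ker,
    Module.finrank_fintype_fun_eq_card]

end SimpleGraph

namespace SimpleGraph

variable {V : Type*} {G : SimpleGraph V} {d : ℕ} {v : ℕ → V}

def IsGeodesicPath (G : SimpleGraph V) (d : ℕ) (v : ℕ → V) : Prop :=
  ∀ i ∈ Icc 1 (d + 1), ∀ j ∈ Icc 1 (d + 1), G.dist (v i) (v j) = max i j - min i j

theorem IsGeodesicPath.adjMatrix_add_one_apply (hv : G.IsGeodesicPath d v) {i j : ℕ}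
    (hi : i ∈ Icc 1 (d + 1)) (hj : j ∈ Icc 1 (d + 1)) :
    (G.adjMatrix ℝ + 1) (v i) (v j) = if i ≤ j + 1 ∧ j ≤ i + 1 then 1 else 0 := by
  have hdist := hv i hi j hj
  rw [G.adjMatrix_add_one_apply]
  refine if_congr ?_ rfl rfl
  rw [← dist_eq_one_iff_adj]
  constructor
  · rintro (h | h)
    · rw [h, dist_self] at hdist
      omega
    · omega
  · intro h
    by_cases hij : i = j
    · exact Or.inl (congrArg v hij)
    · exact Or.inr (by omega)

theorem mem_Icc_and_adj_of_pathNbrs_eq {z : V} {t : ℕ} (ht : pathNbrs G d v z = {t}) :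
    t ∈ Icc 1 (d + 1) ∧ G.Adj z (v t) :=
  mem_filter.mp (ht ▸ mem_singleton_self t)

theorem adjMatrix_add_one_apply_of_pathNbrs_eq {z : V} {t : ℕ}
    (hz : ∀ i ∈ Icc 1 (d + 1), z ≠ v i) (ht : pathNbrs G d v z = {t}) {i : ℕ}
    (hi : i ∈ Icc 1 (d + 1)) : (G.adjMatrix ℝ + 1) z (v i) = if i = t then 1 else 0 := by
  rw [G.adjMatrix_add_one_apply]
  refine if_congr ?_ rfl rfl
  have hmem : i ∈ pathNbrs G d v z ↔ i = t := by rw [ht, mem_singleton]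
  rw [← hmem, pathNbrs, mem_filter]
  simp [hz i hi, hi]

theorem IsGeodesicPath.linearCombination_apply (hv : G.IsGeodesicPath d v) {l : ℕ →₀ ℝ}
    (hl : l ∈ supported ℝ ℝ ↑(Icc 1 (d + 1))) {j : ℕ} (hj : j ∈ Icc 1 (d + 1)) :
    linearCombination ℝ ((G.adjMatrix ℝ + 1).col ∘ v) l (v j) = l (j - 1) + l j + l (j + 1) := by
  have hj₁ : 1 ≤ j := (mem_Icc.mp hj).1
  rw [Matrix.linearCombination_col_comp_apply _ _ hl,
    sum_congr rfl fun i hi ↦ by rw [hv.adjMatrix_add_one_apply hj hi, mul_ite, mul_one, mul_zero],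
    ← sum_filter]
  rw [sum_subset_zero_on_sdiff (s₂ := {j - 1, j, j + 1}) (g := l)]
  · rw [sum_insert (by simp only [mem_insert, mem_singleton]; omega), sum_pair (by omega), add_assoc]
  · intro i hi
    simp only [mem_filter, mem_Icc] at hi
    simp only [mem_insert, mem_singleton]
    omega
  · intro i hi
    obtain ⟨hi, hi'⟩ := mem_sdiff.mp hi
    refine (mem_supported' ℝ l).mp hl i fun hiP ↦ hi' ?_
    simp only [mem_insert, mem_singleton] at hi
    simp only [mem_coe, mem_filter, mem_Icc] at hiP ⊢
    omega
  · intro i _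
    rfl

theorem linearCombination_apply_of_pathNbrs_eq {z : V} {t : ℕ} {l : ℕ →₀ ℝ}
    (hl : l ∈ supported ℝ ℝ ↑(Icc 1 (d + 1))) (hz : ∀ i ∈ Icc 1 (d + 1), z ≠ v i)
    (ht : pathNbrs G d v z = {t}) :
    linearCombination ℝ ((G.adjMatrix ℝ + 1).col ∘ v) l z = l t := by
  have htP : t ∈ Icc 1 (d + 1) := (mem_Icc_and_adj_of_pathNbrs_eq ht).1
  rw [Matrix.linearCombination_col_comp_apply _ _ hl,
    sum_congr rfl fun i hi ↦ by
      rw [adjMatrix_add_one_apply_of_pathNbrs_eq hz ht hi, mul_ite, mul_one, mul_zero],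
    Finset.sum_ite_eq', if_pos htP]

theorem IsGeodesicPath.eq_zero_of_linearCombination_apply_eq_zero (hv : G.IsGeodesicPath d v)
    (hd : d % 3 = 0) {l : ℕ →₀ ℝ} (hl : l ∈ supported ℝ ℝ ↑(Icc 1 (d + 1)))
    (h : ∀ j ∈ Icc 1 (d + 1), linearCombination ℝ ((G.adjMatrix ℝ + 1).col ∘ v) l (v j) = 0) :
    l = 0 := by
  have hzero := eq_zero_of_sum_three_eq_zero (c := l) hd
    ((mem_supported' ℝ l).mp hl 0 (by simp)) ((mem_supported' ℝ l).mp hl (d + 2) (by simp))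
    fun k hk ↦ by
      have hk' : k + 1 ∈ Icc 1 (d + 1) := mem_Icc.mpr ⟨by omega, by omega⟩
      simpa [hv.linearCombination_apply hl hk'] using h (k + 1) hk'
  ext i
  by_cases hi : i ≤ d + 2
  · exact hzero i hi
  · exact (mem_supported' ℝ l).mp hl i (by rw [mem_coe, mem_Icc]; omega)

theorem IsGeodesicPath.linearIndepOn (hv : G.IsGeodesicPath d v) (hd : d % 3 = 0) :
    LinearIndepOn ℝ ((G.adjMatrix ℝ + 1).col ∘ v) ↑(Icc 1 (d + 1)) :=
  linearIndepOn_iff.mpr fun l hl h ↦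
    hv.eq_zero_of_linearCombination_apply_eq_zero hd hl fun j _ ↦ by rw [h]; rfl

theorem IsGeodesicPath.mod_three_eq_one_of_pathNbrs_eq (hv : G.IsGeodesicPath d v)
    (hd : d % 3 = 0) {z : V} {t : ℕ} (hz : ∀ i ∈ Icc 1 (d + 1), z ≠ v i)
    (ht : pathNbrs G d v z = {t}) {l : ℕ →₀ ℝ} (hl : l ∈ supported ℝ ℝ ↑(Icc 1 (d + 1)))
    (hcol : linearCombination ℝ ((G.adjMatrix ℝ + 1).col ∘ v) l = (G.adjMatrix ℝ + 1).col z) :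
    t % 3 = 1 ∧ ∀ s ∈ Icc 1 (d + 1), s % 3 = 1 → l s = 1 := by
  have htP : t ∈ Icc 1 (d + 1) := (mem_Icc_and_adj_of_pathNbrs_eq ht).1
  have hlt : l t = 1 := by
    rw [← linearCombination_apply_of_pathNbrs_eq hl hz ht, hcol, Matrix.col_apply,
      G.adjMatrix_add_one_apply, if_pos (Or.inl rfl)]
  have hrow : ∀ j ∈ Icc 1 (d + 1), l (j - 1) + l j + l (j + 1) = if j = t then 1 else 0 := by
    intro j hj
    rw [← hv.linearCombination_apply hl hj, hcol, Matrix.col_apply, G.adjMatrix_add_one_apply_comm,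
      adjMatrix_add_one_apply_of_pathNbrs_eq hz ht hj]
  obtain ⟨ht₁, hls⟩ := mod_three_eq_one_of_sum_three_eq_zero (c := l) (t := t) hd
    ((mem_supported' ℝ l).mp hl 0 (by simp)) ((mem_supported' ℝ l).mp hl (d + 2) (by simp))
    (by have := mem_Icc.mp htP; omega)
    (fun k hk hkt ↦ by simpa [hkt] using hrow (k + 1) (mem_Icc.mpr ⟨by omega, by omega⟩))
    (by rw [hlt]; exact one_ne_zero)
  exact ⟨ht₁, fun s hs hs₁ ↦ (hls s (by have := mem_Icc.mp hs; omega) hs₁).trans hlt⟩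

theorem closedNbhd_iff_of_adjMatrix_add_one_col_eq {a b : V}
    (h : (G.adjMatrix ℝ + 1).col a = (G.adjMatrix ℝ + 1).col b) (w : V) :
    (w = a ∨ G.Adj a w) ↔ (w = b ∨ G.Adj b w) := by
  have hw := congrFun h w
  simp only [Matrix.col_apply, G.adjMatrix_add_one_apply, G.adj_comm w] at hw
  split_ifs at hw with ha hb hb <;> simp_all

def IsCCanonical (G : SimpleGraph V) : Prop :=
  ∀ a b : V, (∀ z : V, (z = a ∨ G.Adj a z) ↔ (z = b ∨ G.Adj b z)) → a = b

theorem IsGeodesicPath.adj_and_pathNbrs_eq_add_three (hv : G.IsGeodesicPath d v)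
    (hd : d % 3 = 0) (hG : G.IsCCanonical)
    (hspan : ∀ z, (G.adjMatrix ℝ + 1).col z ∈
      span ℝ (((G.adjMatrix ℝ + 1).col ∘ v) '' ↑(Icc 1 (d + 1))))
    ⦃z z' : V⦄ ⦃t t' : ℕ⦄ (hz : ∀ i ∈ Icc 1 (d + 1), z ≠ v i)
    (hz' : ∀ i ∈ Icc 1 (d + 1), z' ≠ v i) (ht : pathNbrs G d v z = {t})
    (ht' : pathNbrs G d v z' = {t'}) (hne : z ≠ z') :
    G.Adj z z' ∧ (t' = t + 3 ∨ t = t' + 3) := by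
  obtain ⟨l, hl, hcol⟩ := (mem_span_image_iff_linearCombination ℝ).mp (hspan z)
  obtain ⟨l', hl', hcol'⟩ := (mem_span_image_iff_linearCombination ℝ).mp (hspan z')
  obtain ⟨ht₁, hls⟩ := hv.mod_three_eq_one_of_pathNbrs_eq hd hz ht hl hcol
  obtain ⟨ht₁', -⟩ := hv.mod_three_eq_one_of_pathNbrs_eq hd hz' ht' hl' hcol'
  have htP : t ∈ Icc 1 (d + 1) := (mem_Icc_and_adj_of_pathNbrs_eq ht).1
  have htP' : t' ∈ Icc 1 (d + 1) := (mem_Icc_and_adj_of_pathNbrs_eq ht').1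
  have hadj : G.Adj z z' := by
    have hentry : (G.adjMatrix ℝ + 1) z' z = 1 := by
      rw [← Matrix.col_apply (G.adjMatrix ℝ + 1) z z', ← hcol,
        linearCombination_apply_of_pathNbrs_eq hl hz' ht', hls t' htP' ht₁']
    rw [G.adjMatrix_add_one_apply] at hentry
    split_ifs at hentry with h
    · exact h.resolve_left hne.symm |>.symm
    · exact absurd hentry zero_ne_one
  -- Equal path neighbours would give equal columns, since the path rows determine `l`.
  have htt' : t ≠ t' := by
    rintro rfl
    have hll' : l = l' := sub_eq_zero.mp <|
      hv.eq_zero_of_linearCombination_apply_eq_zero hd (sub_mem hl hl') fun j hj ↦ by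
        rw [map_sub, hcol, hcol', Pi.sub_apply, sub_eq_zero, Matrix.col_apply, Matrix.col_apply,
          G.adjMatrix_add_one_apply_comm, adjMatrix_add_one_apply_of_pathNbrs_eq hz ht hj,
          G.adjMatrix_add_one_apply_comm, adjMatrix_add_one_apply_of_pathNbrs_eq hz' ht' hj]
    exact hne <| hG z z' <|
      closedNbhd_iff_of_adjMatrix_add_one_col_eq (hcol.symm.trans (hll' ▸ hcol'))
  have hdist : G.dist (v t) (v t') ≤ 3 := by
    have h₁ : G.Adj z (v t) := (mem_Icc_and_adj_of_pathNbrs_eq ht).2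
    have h₃ : G.Adj z' (v t') := (mem_Icc_and_adj_of_pathNbrs_eq ht').2
    exact dist_le (.cons h₁.symm (.cons hadj (.cons h₃ .nil)))
  rw [hv t htP t' htP'] at hdist
  exact ⟨hadj, by omega⟩

end SimpleGraph

theorem stmt_11_general {V : Type*} [Fintype V] (G : SimpleGraph V) (n d : ℕ)
    (hcard : Fintype.card V = n)
    (hcanon : ∀ a b : V, (∀ z : V, (z = a ∨ G.Adj a z) ↔ (z = b ∨ G.Adj b z)) → a = b)
    (hd3 : d % 3 = 0)
    (v : ℕ → V)
    (hpath : ∀ i ∈ Finset.Icc 1 (d + 1), ∀ j ∈ Finset.Icc 1 (d + 1),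
      G.dist (v i) (v j) = max i j - min i j)
    (hmult : multNegOne G = n - d - 1)
    (x y : V) (hxy : x ≠ y) (hxP : ∀ i ∈ Finset.Icc 1 (d + 1), x ≠ v i) (hyP : ∀ i ∈ Finset.Icc 1 (d + 1), y ≠ v i)
    (hx1 : (pathNbrs G d v x).card = 1) (hy1 : (pathNbrs G d v y).card = 1) :
    G.Adj x y ∧
    (∃ m : ℕ, (pathNbrs G d v x = {m} ∧ pathNbrs G d v y = {m + 3}) ∨
      (pathNbrs G d v y = {m} ∧ pathNbrs G d v x = {m + 3})) ∧
    {z : V | (∀ i ∈ Finset.Icc 1 (d + 1), z ≠ v i) ∧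
      (pathNbrs G d v z).card = 1}.ncard ≤ 2 := by
  have hv : G.IsGeodesicPath d v := hpath
  have hspan := (G.adjMatrix ℝ + 1).col_mem_span_image_of_linearIndepOn (hv.linearIndepOn hd3)
    (by have := G.rank_adjMatrix_add_one_add_multNegOne; rw [Nat.card_Icc]; omega)
  have hpair := hv.adj_and_pathNbrs_eq_add_three hd3 hcanon hspan
  obtain ⟨tx, htx⟩ := card_eq_one.mp hx1
  obtain ⟨ty, hty⟩ := card_eq_one.mp hy1
  obtain ⟨hadj, hxy3⟩ := hpair hxP hyP htx hty hxy
  refine ⟨hadj, ?_, ?_⟩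
  · rcases hxy3 with h | h
    · exact ⟨tx, .inl ⟨htx, h ▸ hty⟩⟩
    · exact ⟨ty, .inr ⟨hty, h ▸ htx⟩⟩
  · by_contra! hcon
    obtain ⟨a, ⟨haP, ha1⟩, b, ⟨hbP, hb1⟩, c, ⟨hcP, hc1⟩, hab, hac, hbc⟩ :=
      (Set.two_lt_ncard (Set.toFinite _)).mp hcon
    obtain ⟨ta, hta⟩ := card_eq_one.mp ha1
    obtain ⟨tb, htb⟩ := card_eq_one.mp hb1
    obtain ⟨tc, htc⟩ := card_eq_one.mp hc1
    have := (hpair haP hbP hta htb hab).2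
    have := (hpair haP hcP hta htc hac).2
    have := (hpair hbP hcP htb htc hbc).2
    omega

theorem stmt_11 {V : Type*} [Fintype V] (G : SimpleGraph V) (n d : ℕ)
    (hconn : G.Connected)
    (hcard : Fintype.card V = n)
    (hcanon : ∀ a b : V, (∀ z : V, (z = a ∨ G.Adj a z) ↔ (z = b ∨ G.Adj b z)) → a = b)
    (hd3 : d % 3 = 0)
    (hdiam : ∀ a b : V, G.dist a b ≤ d)
    (v : ℕ → V)
    (hpath : ∀ i ∈ Finset.Icc 1 (d + 1), ∀ j ∈ Finset.Icc 1 (d + 1),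
      G.dist (v i) (v j) = max i j - min i j)
    (hmult : multNegOne G = n - d - 1)
    (x y : V) (hxy : x ≠ y) (hxP : ∀ i ∈ Finset.Icc 1 (d + 1), x ≠ v i) (hyP : ∀ i ∈ Finset.Icc 1 (d + 1), y ≠ v i)
    (hx1 : (pathNbrs G d v x).card = 1) (hy1 : (pathNbrs G d v y).card = 1) :
    G.Adj x y ∧
    (∃ m : ℕ, (pathNbrs G d v x = {m} ∧ pathNbrs G d v y = {m + 3}) ∨
      (pathNbrs G d v y = {m} ∧ pathNbrs G d v x = {m + 3})) ∧
    {z : V | (∀ i ∈ Finset.Icc 1 (d + 1), z ≠ v i) ∧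
      (pathNbrs G d v z).card = 1}.ncard ≤ 2 :=
  stmt_11_general G n d hcard hcanon hd3 v hpath hmult x y hxy hxP hyP hx1 hy1
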